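/- arXiv:1304.5653 — 2 statements merged into one kernel-verified Lean document; each statement's English description precedes it below -/
import Mathlib

section
/- Let D < 0 be an integer congruent to 0 or 1 mod 4 and let k ≥ 2 be an integer. For z in the upper half-plane, the series f_{k,D}(z) = π^{-k} · Σ over triples (a,b,c) ∈ ℤ³ with b² − 4ac = D and a > 0 of (az² + bz + c)^{−k} converges absolutely, and uniformly on compact subsets of the upper half-plane minus the CM points of discriminant D. -/
/-!
Let `τ_Q = (-b + i√|D|) / (2a)` be the root in `ℍ` of `Q = (a, b, c)`, so that
`Q(z) = a (z - τ_Q) (z - conj τ_Q)`. Only finitely many CM points lie near a compact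
`K ⊆ ℍ`, so if `K` contains none of them then `|z - τ_Q| ≥ δ > 0` on `K`, while
`|z - conj τ_Q| ≫ 1 + |b| / a`; hence `|Q(z)| ≫ 2a + |b|` uniformly on `K`.
Writing `b = 4aj + r` with `0 ≤ r < 4a`, we get `2a + |b| ≥ a (|j| + 1)`, and `r` is a square
root of `D` modulo `4a`. There are at most `4|D| d(4a) ≪ √a` such roots, so for `k ≥ 2` the
series is dominated by `Σ_a √a a⁻² Σ_j (|j| + 1)⁻² < ∞`, and the Weierstrass M-test applies.
-/

open Complex Real Filter Topology BigOperators

noncomputable section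

/-- The upper half-plane, as a subset of `ℂ`. -/
def UHP : Set ℂ := {z : ℂ | 0 < z.im}

/-- `z` is a CM point of discriminant `D`: a root in the upper half-plane of an
integral quadratic `a X² + b X + c` with `a > 0` and `b² - 4ac = D`. -/
def IsCM (D : ℤ) (z : ℂ) : Prop :=
  0 < z.im ∧ ∃ a b c : ℤ, 0 < a ∧ b ^ 2 - 4 * a * c = D ∧ (a : ℂ) * z ^ 2 + b * z + c = 0

/-- Integral binary quadratic forms `(a, b, c)` of discriminant `D` with `a > 0`. -/
def QF (D : ℤ) : Set (ℤ × ℤ × ℤ) :=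
  {Q | 0 < Q.1 ∧ Q.2.1 ^ 2 - 4 * Q.1 * Q.2.2 = D}

/-- The quadratic polynomial `a z² + b z + c` attached to `Q = (a, b, c)`. -/
def qpoly (Q : ℤ × ℤ × ℤ) (z : ℂ) : ℂ := (Q.1 : ℂ) * z ^ 2 + (Q.2.1 : ℂ) * z + (Q.2.2 : ℂ)

/-- The series `f_{k,D}(z) = π⁻ᵏ Σ_{b²-4ac=D, a>0} (a z² + b z + c)⁻ᵏ`. -/
def fkD (k : ℕ) (D : ℤ) (z : ℂ) : ℂ :=
  (π : ℂ) ^ (-(k : ℤ)) * ∑' Q : QF D, qpoly Q.1 z ^ (-(k : ℤ))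

/-- The Möbius action of `γ ∈ SL₂(ℤ)` on `ℂ`. -/
def mob (γ : Matrix.SpecialLinearGroup (Fin 2) ℤ) (z : ℂ) : ℂ :=
  ((γ.1 0 0 : ℂ) * z + (γ.1 0 1 : ℂ)) / ((γ.1 1 0 : ℂ) * z + (γ.1 1 1 : ℂ))

open ComplexConjugate Finset

theorem Nat.card_divisors_le_two_mul_sqrt_add_one (m : ℕ) : #m.divisors ≤ 2 * (m.sqrt + 1) := by
  have hmaps : ∀ d ∈ m.divisors, min d (m / d) ∈ range (m.sqrt + 1) := by
    intro d hd
    rw [mem_range, Nat.lt_succ_iff, Nat.le_sqrt]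
    calc min d (m / d) * min d (m / d) ≤ d * (m / d) :=
          Nat.mul_le_mul (min_le_left _ _) (min_le_right _ _)
      _ = m := Nat.mul_div_cancel' (Nat.dvd_of_mem_divisors hd)
  have hfiber : ∀ e ∈ range (m.sqrt + 1), #{d ∈ m.divisors | min d (m / d) = e} ≤ 2 := by
    intro e _
    refine (card_le_card fun d hd ↦ ?_).trans (card_le_two (a := e) (b := m / e))
    obtain ⟨hdiv, rfl⟩ := mem_filter.1 hd
    rcases min_choice d (m / d) with h | h <;> rw [h] <;>
      simp [Nat.div_div_self (Nat.dvd_of_mem_divisors hdiv) (Nat.mem_divisors.1 hdiv).2]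
  simpa [mul_comm] using card_le_mul_card_image_of_maps_to hmaps 2 hfiber

theorem Finset.card_le_of_forall_modEq {s : Finset ℕ} {L e : ℕ} (hs : ∀ y ∈ s, y < L * e)
    (hmod : ∀ y ∈ s, ∀ y' ∈ s, y ≡ y' [MOD L]) : #s ≤ e := by
  simpa using card_le_card_of_injOn (t := range e) (· / L)
    (fun y hy ↦ mem_range.2 (Nat.div_lt_of_lt_mul (hs y hy)))
    (fun y hy y' hy' h ↦ by
      rw [← Nat.div_add_mod y L, ← Nat.div_add_mod y' L, show y / L = y' / L from h,
        hmod y hy y' hy'])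

theorem Int.dvd_four_mul_of_dvd_sub_of_dvd_add {e x y n : ℤ} (hsub : e ∣ x - y) (hadd : e ∣ x + y)
    (hsq : e ∣ x ^ 2 + n) : e ∣ 4 * n := by
  rw [show 4 * n = 4 * (x ^ 2 + n) - ((x + y) + (x - y)) ^ 2 by ring]
  exact (hsq.mul_left 4).sub (dvd_pow (hadd.add hsub) two_ne_zero)

theorem Int.ediv_gcd_sub_dvd_add {m x y n : ℤ} (hm : 0 < m) (hx : m ∣ x ^ 2 + n)
    (hy : m ∣ y ^ 2 + n) : m / m.gcd (x - y) ∣ x + y := by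
  have h : (x + y) * (x - y) ≡ 0 * (x - y) [ZMOD m] := by
    rw [Int.modEq_iff_dvd, show 0 * (x - y) - (x + y) * (x - y) = y ^ 2 + n - (x ^ 2 + n) by ring]
    exact hy.sub hx
  exact (Int.ModEq.cancel_right_div_gcd hm h).symm.dvd.trans (by simp)

-- Solutions with the same `d = gcd(m, x₀ - y)` agree modulo `lcm(d, m / d) = m / gcd(d, m / d)`,
-- and `gcd(d, m / d) ∣ 4n`.
theorem card_filter_gcd_sub_eq_le {m n x₀ : ℕ} (hn : 0 < n) (hx₀ : m ∣ x₀ ^ 2 + n) (d : ℕ) :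
    #{y ∈ range m | m ∣ y ^ 2 + n ∧ Int.gcd m ((x₀ : ℤ) - y) = d} ≤ 4 * n := by
  set T := {y ∈ range m | m ∣ y ^ 2 + n ∧ Int.gcd m ((x₀ : ℤ) - y) = d}
  obtain hT | ⟨y₁, hy₁⟩ := T.eq_empty_or_nonempty
  · simp [hT]
  have hm : 0 < m := (mem_range.1 (mem_filter.1 hy₁).1).pos
  have hx₀' : (m : ℤ) ∣ (x₀ : ℤ) ^ 2 + n := by exact_mod_cast hx₀
  have hd : d ∣ m := (mem_filter.1 hy₁).2.2 ▸ Int.natCast_dvd_natCast.1 (Int.gcd_dvd_left ..)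
  have hT : ∀ y ∈ T, y < m ∧ (d : ℤ) ∣ x₀ - y ∧ ((m / d : ℕ) : ℤ) ∣ x₀ + y := by
    intro y hy
    obtain ⟨hym, hdvd, rfl⟩ := mem_filter.1 hy
    refine ⟨mem_range.1 hym, Int.gcd_dvd_right .., ?_⟩
    simpa using Int.ediv_gcd_sub_dvd_add (by exact_mod_cast hm) hx₀' (by exact_mod_cast hdvd)
  obtain ⟨-, hsub₁, hadd₁⟩ := hT y₁ hy₁
  have he : Nat.gcd d (m / d) ∣ 4 * n := by
    have h := Int.dvd_four_mul_of_dvd_sub_of_dvd_add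
      ((Int.natCast_dvd_natCast.2 (Nat.gcd_dvd_left ..)).trans hsub₁)
      ((Int.natCast_dvd_natCast.2 (Nat.gcd_dvd_right ..)).trans hadd₁)
      ((Int.natCast_dvd_natCast.2 ((Nat.gcd_dvd_left ..).trans hd)).trans hx₀')
    exact_mod_cast h
  refine (card_le_of_forall_modEq (L := Nat.lcm d (m / d)) (fun y hy ↦ ?_)
    (fun y hy y' hy' ↦ ?_)).trans (Nat.le_of_dvd (by positivity) he)
  · rw [mul_comm, Nat.gcd_mul_lcm, Nat.mul_div_cancel' hd]
    exact (hT y hy).1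
  · obtain ⟨-, hsub, hadd⟩ := hT y hy
    obtain ⟨-, hsub', hadd'⟩ := hT y' hy'
    rw [← Int.natCast_modEq_iff, Int.modEq_iff_dvd, ← Int.lcm_natCast_natCast, Int.coe_lcm_dvd_iff]
    exact ⟨by simpa using hsub.sub hsub', by simpa using hadd'.sub hadd⟩

theorem card_filter_dvd_sq_add_le (m : ℕ) {n : ℕ} (hn : 0 < n) :
    #{y ∈ range m | m ∣ y ^ 2 + n} ≤ 4 * n * #m.divisors := by
  obtain hS | ⟨x₀, hx₀⟩ := ({y ∈ range m | m ∣ y ^ 2 + n}).eq_empty_or_nonempty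
  · simp [hS]
  obtain ⟨hx₀m, hx₀⟩ := mem_filter.1 hx₀
  refine card_le_mul_card_image_of_maps_to (f := fun y : ℕ ↦ Int.gcd m ((x₀ : ℤ) - y))
    (fun y _ ↦ Nat.mem_divisors.2 ⟨Int.natCast_dvd_natCast.1 (Int.gcd_dvd_left ..),
      (mem_range.1 hx₀m).pos.ne'⟩) _ fun d _ ↦ ?_
  simpa only [filter_filter] using card_filter_gcd_sub_eq_le hn hx₀ d

theorem card_filter_dvd_sq_add_le_mul_sqrt {n a : ℕ} (hn : 0 < n) (ha : 0 < a) :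
    (#{r ∈ range (4 * a) | 4 * a ∣ r ^ 2 + n} : ℝ) ≤ 24 * n * √a := by
  have hcount : (#{r ∈ range (4 * a) | 4 * a ∣ r ^ 2 + n} : ℝ) ≤ 8 * n * ((4 * a).sqrt + 1) := by
    have := (card_filter_dvd_sq_add_le (4 * a) hn).trans
      (Nat.mul_le_mul_left (4 * n) (Nat.card_divisors_le_two_mul_sqrt_add_one (4 * a)))
    calc _ ≤ ((4 * n * (2 * ((4 * a).sqrt + 1)) : ℕ) : ℝ) := by exact_mod_cast this
      _ = _ := by push_cast; ring
  have hsqrt : ((4 * a).sqrt : ℝ) + 1 ≤ 3 * √a := by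
    have h4 : √((4 * a : ℕ) : ℝ) = 2 * √a := by
      rw [Nat.cast_mul, Nat.cast_ofNat, show (4 : ℝ) = 2 ^ 2 by norm_num,
        Real.sqrt_mul (by positivity), Real.sqrt_sq (by norm_num)]
    have h1 : (1 : ℝ) ≤ √a := Real.one_le_sqrt.2 (by exact_mod_cast ha)
    linarith [h4 ▸ Real.nat_sqrt_le_real_sqrt (a := 4 * a)]
  calc _ ≤ 8 * (n : ℝ) * (3 * √a) := hcount.trans (by gcongr)
    _ = _ := by ring

theorem summable_sqrt_div_sq : Summable fun a : ℕ ↦ √a / (a : ℝ) ^ 2 := by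
  refine (Real.summable_nat_rpow.2 (by norm_num : (-3 / 2 : ℝ) < -1)).congr fun a ↦ ?_
  rcases a.eq_zero_or_pos with rfl | ha
  · simp [Real.zero_rpow]
  have ha : (0 : ℝ) < a := by exact_mod_cast ha
  rw [Real.sqrt_eq_rpow, ← Real.rpow_natCast, ← Real.rpow_sub ha]
  norm_num

theorem summable_inv_abs_add_one_sq : Summable fun j : ℤ ↦ ((|(j : ℝ)| + 1) ^ 2)⁻¹ := by
  have h : Summable fun j : ℕ ↦ (((j : ℝ) + 1) ^ 2)⁻¹ := by
    simpa using (summable_nat_add_iff 1).2 (Real.summable_nat_pow_inv.2 one_lt_two)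
  exact .of_nat_of_neg (by simpa using h) (by simpa using h)

theorem summable_inv_sq_of_dvd_sq_add {n : ℕ} (hn : 0 < n) :
    Summable fun p : ℕ × ℕ ↦
      if p.2 < 4 * p.1 ∧ 4 * p.1 ∣ p.2 ^ 2 + n then ((p.1 : ℝ) ^ 2)⁻¹ else 0 := by
  set H := fun p : ℕ × ℕ ↦ if p.2 < 4 * p.1 ∧ 4 * p.1 ∣ p.2 ^ 2 + n then ((p.1 : ℝ) ^ 2)⁻¹ else 0
  have hH : 0 ≤ H := fun p ↦ by positivity
  have hrow : ∀ a, ∑' r, H (a, r) = #{r ∈ range (4 * a) | 4 * a ∣ r ^ 2 + n} * ((a : ℝ) ^ 2)⁻¹ := by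
    intro a
    rw [tsum_eq_sum (s := range (4 * a)) fun r hr ↦ if_neg fun h ↦ hr (mem_range.2 h.1),
      card_filter, Nat.cast_sum, sum_mul]
    refine sum_congr rfl fun r hr ↦ ?_
    simp [mem_range.1 hr]
  refine (summable_prod_of_nonneg hH).2 ⟨fun a ↦ summable_of_ne_finset_zero (s := range (4 * a))
    fun r hr ↦ if_neg fun h ↦ hr (mem_range.2 h.1), ?_⟩
  refine .of_nonneg_of_le (fun a ↦ tsum_nonneg fun r ↦ hH _) (fun a ↦ ?_)
    (summable_sqrt_div_sq.mul_left (24 * n : ℝ))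
  rw [hrow]
  rcases a.eq_zero_or_pos with rfl | ha
  · simp
  rw [mul_div_assoc', div_eq_mul_inv]
  gcongr
  exact card_filter_dvd_sq_add_le_mul_sqrt hn ha

def cmPoint (D a b : ℤ) : ℂ := ⟨-b / (2 * a), √(-D) / (2 * a)⟩

section

variable {D a b c : ℤ}

@[simp] theorem cmPoint_re : (cmPoint D a b).re = -b / (2 * a) := rfl

@[simp] theorem cmPoint_im : (cmPoint D a b).im = √(-D) / (2 * a) := rfl

theorem cmPoint_im_pos (hD : D < 0) (ha : 0 < a) : 0 < (cmPoint D a b).im := by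
  have hD' : (0 : ℝ) < -D := by exact_mod_cast neg_pos.2 hD
  have ha' : (0 : ℝ) < a := by exact_mod_cast ha
  exact div_pos (Real.sqrt_pos.2 hD') (by positivity)

theorem qpoly_eq_mul_sub_cmPoint_mul_sub_conj (hD : D < 0) (ha : 0 < a)
    (hdisc : b ^ 2 - 4 * a * c = D) (z : ℂ) :
    qpoly (a, b, c) z = a * (z - cmPoint D a b) * (z - conj (cmPoint D a b)) := by
  have ha' : (a : ℝ) ≠ 0 := by exact_mod_cast ha.ne'
  have hsq : √(-D : ℝ) ^ 2 = -D := Real.sq_sqrt (by exact_mod_cast (neg_pos.2 hD).le)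
  have hdisc' : (b : ℝ) ^ 2 - 4 * a * c = D := by exact_mod_cast hdisc
  apply Complex.ext <;> simp [qpoly, pow_two] <;> field_simp
  · linear_combination -hsq - hdisc'
  · ring

theorem isCM_iff_exists_cmPoint (hD : D < 0) {w : ℂ} :
    IsCM D w ↔ ∃ a b c : ℤ, 0 < a ∧ b ^ 2 - 4 * a * c = D ∧ w = cmPoint D a b := by
  constructor
  · rintro ⟨hw, a, b, c, ha, hdisc, hroot⟩
    refine ⟨a, b, c, ha, hdisc, ?_⟩
    have h : (a : ℂ) * w ^ 2 + b * w + c = _ := qpoly_eq_mul_sub_cmPoint_mul_sub_conj hD ha hdisc w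
    rcases mul_eq_zero.1 (hroot ▸ h).symm with h | h
    · rcases mul_eq_zero.1 h with h | h
      · exact absurd h (by exact_mod_cast ha.ne')
      · exact sub_eq_zero.1 h
    · have := congrArg Complex.im (sub_eq_zero.1 h)
      simp only [conj_im] at this
      linarith [cmPoint_im_pos (b := b) hD ha]
  · rintro ⟨a, b, c, ha, hdisc, rfl⟩
    refine ⟨cmPoint_im_pos hD ha, a, b, c, ha, hdisc, ?_⟩
    have h : (a : ℂ) * _ ^ 2 + b * _ + c = _ :=
      qpoly_eq_mul_sub_cmPoint_mul_sub_conj hD ha hdisc (cmPoint D a b)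
    simpa using h

theorem finite_setOf_isCM (hD : D < 0) {t : ℝ} (ht : 0 < t) (R : ℝ) :
    {w | IsCM D w ∧ t ≤ w.im ∧ |w.re| ≤ R}.Finite := by
  set A := ⌈√(-D) / (2 * t)⌉
  set B := ⌈2 * A * R⌉
  refine (((Set.finite_Icc 1 A).prod (Set.finite_Icc (-B) B)).image
    fun p ↦ cmPoint D p.1 p.2).subset ?_
  rintro w ⟨hw, him, hre⟩
  obtain ⟨a, b, c, ha, -, rfl⟩ := (isCM_iff_exists_cmPoint hD).1 hw
  have ha' : (0 : ℝ) < a := by exact_mod_cast ha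
  have haA : a ≤ A := by
    refine Int.cast_le.1 (le_trans ?_ (Int.le_ceil _))
    rw [cmPoint_im, le_div_iff₀ (by positivity)] at him
    rw [le_div_iff₀ (by positivity)]
    linarith
  have hbB : |b| ≤ B := by
    refine Int.cast_le.1 (le_trans ?_ (Int.le_ceil _))
    rw [cmPoint_re, abs_div, abs_neg, abs_of_pos (by positivity : (0 : ℝ) < 2 * a),
      div_le_iff₀ (by positivity)] at hre
    have : (a : ℝ) ≤ A := by exact_mod_cast haA
    push_cast
    nlinarith [abs_nonneg (b : ℝ)]
  exact ⟨(a, b), ⟨⟨ha, haA⟩, abs_le.1 hbB⟩, rfl⟩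

theorem exists_pos_le_dist_isCM (hD : D < 0) {K : Set ℂ} (hK : IsCompact K)
    (hKsub : K ⊆ {z | 0 < z.im ∧ ¬ IsCM D z}) :
    ∃ δ > 0, ∀ z ∈ K, ∀ w, IsCM D w → δ ≤ dist z w := by
  obtain ⟨y₀, hy₀, him⟩ :=
    hK.exists_forall_le' continuous_im.continuousOn fun z hz ↦ (hKsub hz).1
  obtain ⟨R, hR⟩ := hK.isBounded.exists_norm_le
  -- `S` contains every CM point within distance `y₀ / 2` of `K`.
  set S := {w | IsCM D w ∧ y₀ / 2 ≤ w.im ∧ |w.re| ≤ R + y₀ / 2}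
  obtain ⟨r, hr, hrS⟩ := Metric.exists_pos_forall_lt_edist hK
    (finite_setOf_isCM hD (half_pos hy₀) _).isClosed
    (Set.disjoint_left.2 fun z hz hzS ↦ (hKsub hz).2 hzS.1)
  refine ⟨min r (y₀ / 2), lt_min hr (half_pos hy₀), fun z hz w hw ↦ ?_⟩
  by_cases hwS : w ∈ S
  · have h := hrS z hz w hwS
    rw [edist_nndist, ENNReal.coe_lt_coe] at h
    exact (min_le_left _ _).trans h.le
  refine (min_le_right _ _).trans ?_
  have him' : |z.im - w.im| ≤ dist z w := by simpa [dist_eq_norm] using abs_im_le_norm (z - w)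
  have hre' : |z.re - w.re| ≤ dist z w := by simpa [dist_eq_norm] using abs_re_le_norm (z - w)
  have hzre : |z.re| ≤ R := (abs_re_le_norm z).trans (hR z hz)
  simp only [S, Set.mem_ofPred_eq, not_and, not_le] at hwS
  by_cases h : y₀ / 2 ≤ w.im
  · have := hwS hw h
    linarith [abs_sub_abs_le_abs_sub w.re z.re, abs_sub_comm z.re w.re]
  · linarith [le_abs_self (z.im - w.im), him z hz]

theorem mul_one_add_abs_re_le_norm_sub_conj {z τ : ℂ} {y₀ R : ℝ} (hy₀ : 0 < y₀)
    (hτ : 0 < τ.im) (him : y₀ ≤ z.im) (hre : |z.re| ≤ R) :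
    y₀ / (R + 1 + y₀) * (1 + |τ.re|) ≤ ‖z - conj τ‖ := by
  have hR : 0 ≤ R := (abs_nonneg _).trans hre
  have hre' : |z.re - τ.re| ≤ ‖z - conj τ‖ := by simpa using abs_re_le_norm (z - conj τ)
  have him' : y₀ ≤ ‖z - conj τ‖ := by
    have := abs_im_le_norm (z - conj τ)
    simp only [sub_im, conj_im, sub_neg_eq_add] at this
    linarith [le_abs_self (z.im + τ.im)]
  rw [div_mul_eq_mul_div, div_le_iff₀ (by positivity)]
  nlinarith [abs_sub_abs_le_abs_sub τ.re z.re, abs_sub_comm τ.re z.re]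

theorem mul_two_mul_add_abs_le_norm_qpoly (hD : D < 0) (ha : 0 < a)
    (hdisc : b ^ 2 - 4 * a * c = D) {z : ℂ} {y₀ R δ : ℝ} (hy₀ : 0 < y₀) (him : y₀ ≤ z.im)
    (hre : |z.re| ≤ R) (hδ : δ ≤ dist z (cmPoint D a b)) :
    δ * y₀ / (2 * (R + 1 + y₀)) * (2 * a + |(b : ℝ)|) ≤ ‖qpoly (a, b, c) z‖ := by
  have ha' : (0 : ℝ) < a := by exact_mod_cast ha
  have hR : 0 ≤ R := (abs_nonneg _).trans hre
  have hconj := mul_one_add_abs_re_le_norm_sub_conj hy₀ (cmPoint_im_pos (b := b) hD ha) him hre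
  rw [cmPoint_re, abs_div, abs_neg, abs_of_pos (by positivity : (0 : ℝ) < 2 * a)] at hconj
  rw [qpoly_eq_mul_sub_cmPoint_mul_sub_conj hD ha hdisc, norm_mul, norm_mul, ← dist_eq_norm,
    norm_intCast, abs_of_pos ha']
  calc δ * y₀ / (2 * (R + 1 + y₀)) * (2 * a + |(b : ℝ)|)
      = a * δ * (y₀ / (R + 1 + y₀) * (1 + |(b : ℝ)| / (2 * a))) := by field_simp
    _ ≤ _ := mul_le_mul (by gcongr) hconj (by positivity) (by positivity)

end

theorem dvd_emod_sq_add {a b c : ℤ} {n : ℕ} (hdisc : b ^ 2 - 4 * a * c = -n) :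
    4 * a ∣ (b % (4 * a)) ^ 2 + n := by
  rw [Int.emod_def]
  exact ⟨c - 2 * (b / (4 * a)) * b + 4 * a * (b / (4 * a)) ^ 2, by linear_combination hdisc⟩

theorem mul_abs_ediv_add_one_le {a b : ℤ} (ha : 0 < a) : a * (|b / (4 * a)| + 1) ≤ 2 * a + |b| := by
  have hr0 := Int.emod_nonneg b (by omega : 4 * a ≠ 0)
  have hr := Int.emod_lt_of_pos b (by omega : 0 < 4 * a)
  have h : |4 * a * (b / (4 * a))| ≤ |b| + b % (4 * a) := by
    rw [← abs_of_nonneg hr0, eq_sub_of_add_eq (Int.mul_ediv_add_emod b (4 * a))]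
    exact abs_sub _ _
  rw [abs_mul, abs_of_pos (by omega : 0 < 4 * a)] at h
  nlinarith [abs_nonneg b]

-- `Q = (a, b, c)` is recorded as `((a, r), j)`, where `b = 4 a j + r` with `0 ≤ r < 4 a`.
def residueIndex (Q : ℤ × ℤ × ℤ) : (ℕ × ℕ) × ℤ :=
  ((Q.1.toNat, (Q.2.1 % (4 * Q.1)).toNat), Q.2.1 / (4 * Q.1))

theorem injOn_residueIndex (D : ℤ) : Set.InjOn residueIndex (QF D) := by
  rintro ⟨a, b, c⟩ ⟨ha, hdisc⟩ ⟨a', b', c'⟩ ⟨ha', hdisc'⟩ h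
  simp only [residueIndex, Prod.mk.injEq] at h ha ha' hdisc hdisc'
  obtain ⟨⟨haa, hr⟩, hj⟩ := h
  obtain rfl : a = a' := by omega
  have := Int.emod_nonneg b (by omega : 4 * a ≠ 0)
  have := Int.emod_nonneg b' (by omega : 4 * a ≠ 0)
  obtain rfl : b = b' := by
    rw [← Int.mul_ediv_add_emod b (4 * a), ← Int.mul_ediv_add_emod b' (4 * a), hj]
    omega
  obtain rfl : c = c' := mul_left_cancel₀ (by omega : 4 * a ≠ 0) (by linarith)
  rfl

theorem summable_inv_two_mul_add_abs_sq {D : ℤ} (hD : D < 0) :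
    Summable fun Q : QF D ↦ ((2 * (Q.1.1 : ℝ) + |(Q.1.2.1 : ℝ)|) ^ 2)⁻¹ := by
  obtain ⟨n, hn, rfl⟩ : ∃ n : ℕ, 0 < n ∧ D = -n := ⟨D.natAbs, by omega, by omega⟩
  refine .of_nonneg_of_le (fun _ ↦ by positivity) (fun Q ↦ ?_)
    (((summable_inv_sq_of_dvd_sq_add hn).mul_of_nonneg summable_inv_abs_add_one_sq
      (fun _ ↦ by positivity) (fun _ ↦ by positivity)).comp_injective
      (injOn_residueIndex _).injective)
  obtain ⟨⟨a, b, c⟩, ha, hdisc⟩ := Q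
  simp only at ha hdisc
  have ha' : ((a.toNat : ℕ) : ℝ) = a := by rw [← Int.cast_natCast, Int.toNat_of_nonneg ha.le]
  have hr0 := Int.emod_nonneg b (by omega : 4 * a ≠ 0)
  have hcond : (b % (4 * a)).toNat < 4 * a.toNat ∧ 4 * a.toNat ∣ (b % (4 * a)).toNat ^ 2 + n := by
    refine ⟨by have := Int.emod_lt_of_pos b (by omega : 0 < 4 * a); omega, ?_⟩
    rw [← Int.natCast_dvd_natCast]
    push_cast
    rw [Int.toNat_of_nonneg hr0, Int.toNat_of_nonneg ha.le]
    exact dvd_emod_sq_add hdisc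
  simp only [Function.comp_apply, Set.domRestrict_apply, residueIndex, if_pos hcond, ha', ← mul_inv,
    ← mul_pow]
  gcongr
  exact_mod_cast mul_abs_ediv_add_one_le ha

theorem norm_zpow_neg_le {q : ℂ} {k : ℕ} {C s : ℝ} (hk : 2 ≤ k) (hC : 0 < C) (hs : 1 ≤ s)
    (h : C * s ≤ ‖q‖) : ‖q ^ (-(k : ℤ))‖ ≤ (C ^ k)⁻¹ * (s ^ 2)⁻¹ := by
  rw [norm_zpow, zpow_neg, zpow_natCast]
  calc (‖q‖ ^ k)⁻¹ ≤ ((C * s) ^ k)⁻¹ := by gcongr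
    _ = (C ^ k)⁻¹ * (s ^ k)⁻¹ := by rw [mul_pow, mul_inv]
    _ ≤ (C ^ k)⁻¹ * (s ^ 2)⁻¹ := by gcongr

theorem exists_summable_norm_qpoly_zpow_le {k : ℕ} (hk : 2 ≤ k) {D : ℤ} (hD : D < 0)
    {K : Set ℂ} (hK : IsCompact K) (hKsub : K ⊆ {z | 0 < z.im ∧ ¬ IsCM D z}) :
    ∃ u : QF D → ℝ, Summable u ∧ ∀ Q : QF D, ∀ z ∈ K, ‖qpoly Q.1 z ^ (-(k : ℤ))‖ ≤ u Q := by
  obtain ⟨y₀, hy₀, him⟩ :=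
    hK.exists_forall_le' continuous_im.continuousOn fun z hz ↦ (hKsub hz).1
  obtain ⟨R, hR, hRK⟩ := hK.isBounded.exists_pos_norm_le
  obtain ⟨δ, hδ, hδK⟩ := exists_pos_le_dist_isCM hD hK hKsub
  set C := δ * y₀ / (2 * (R + 1 + y₀))
  refine ⟨fun Q ↦ (C ^ k)⁻¹ * ((2 * (Q.1.1 : ℝ) + |(Q.1.2.1 : ℝ)|) ^ 2)⁻¹,
    (summable_inv_two_mul_add_abs_sq hD).mul_left _, ?_⟩
  rintro ⟨⟨a, b, c⟩, ha, hdisc⟩ z hz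
  have ha' : (1 : ℝ) ≤ a := by exact_mod_cast ha
  exact norm_zpow_neg_le hk (by positivity) (by linarith [abs_nonneg (b : ℝ)])
    (mul_two_mul_add_abs_le_norm_qpoly hD ha hdisc hy₀ (him z hz)
      ((abs_re_le_norm z).trans (hRK z hz))
      (hδK z hz _ ((isCM_iff_exists_cmPoint hD).2 ⟨a, b, c, ha, hdisc, rfl⟩)))

theorem stmt0_general (k : ℕ) (hk : 2 ≤ k) (D : ℤ) (hD : D < 0) :
    (∀ z : ℂ, 0 < z.im → ¬ IsCM D z →
      Summable (fun Q : QF D => ‖qpoly Q.1 z ^ (-(k : ℤ))‖)) ∧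
    (∀ K : Set ℂ, IsCompact K → K ⊆ {z : ℂ | 0 < z.im ∧ ¬ IsCM D z} →
      TendstoUniformlyOn
        (fun (s : Finset (QF D)) (z : ℂ) => ∑ Q ∈ s, qpoly Q.1 z ^ (-(k : ℤ)))
        (fun z : ℂ => ∑' Q : QF D, qpoly Q.1 z ^ (-(k : ℤ))) atTop K) := by
  refine ⟨fun z hz hcm ↦ ?_, fun K hK hKsub ↦ ?_⟩
  · obtain ⟨u, hu, hle⟩ := exists_summable_norm_qpoly_zpow_le hk hD isCompact_singleton
      (Set.singleton_subset_iff.2 ⟨hz, hcm⟩)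
    exact hu.of_nonneg_of_le (fun _ ↦ norm_nonneg _) fun Q ↦ hle Q z rfl
  · obtain ⟨u, hu, hle⟩ := exists_summable_norm_qpoly_zpow_le hk hD hK hKsub
    exact tendstoUniformlyOn_tsum hu hle

/-- For `D < 0`, `D ≡ 0, 1 (mod 4)` and `k ≥ 2`, the series defining
`f_{k,D}` converges absolutely at every non-CM point of the upper half-plane, and the
convergence is uniform on compact subsets of the upper half-plane minus the CM points
of discriminant `D`. -/
theorem stmt0 (k : ℕ) (hk : 2 ≤ k) (D : ℤ) (hD : D < 0)
    (hDcong : D % 4 = 0 ∨ D % 4 = 1) :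
    (∀ z : ℂ, 0 < z.im → ¬ IsCM D z →
      Summable (fun Q : QF D => ‖qpoly Q.1 z ^ (-(k : ℤ))‖)) ∧
    (∀ K : Set ℂ, IsCompact K → K ⊆ {z : ℂ | 0 < z.im ∧ ¬ IsCM D z} →
      TendstoUniformlyOn
        (fun (s : Finset (QF D)) (z : ℂ) => ∑ Q ∈ s, qpoly Q.1 z ^ (-(k : ℤ)))
        (fun z : ℂ => ∑' Q : QF D, qpoly Q.1 z ^ (-(k : ℤ))) atTop K) :=
  stmt0_general k hk D hD
end
end

section
/- Let D < 0 with D ≡ 0 or 1 mod 4 and k ≥ 2. The function f_{k,D}(z) = π^{-k} Σ_{(a,b,c)∈ℤ³, b²−4ac=D, a>0} (az²+bz+c)^{−k} satisfies the modular transformation law f_{k,D}((pz+q)/(rz+s)) = (rz+s)^{2k} f_{k,D}(z) for every matrix (p q; r s) ∈ SL₂(ℤ) and every z ∈ ℍ that is not a CM point of discriminant D. -/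
/-!
A matrix `(p q; r s)` of determinant one acts on binary quadratic forms by the substitution
`Q(X, Y) ↦ Q(pX + qY, rX + sY)`. This preserves the discriminant, and for `D < 0` it preserves
positive definiteness, so it permutes the forms of `QF D`. The substitution is compatible with
the Möbius action: `(rz + s)² Q(γz, 1) = (γ·Q)(z, 1)`. Hence every term of the series at `γz`
is `(rz + s)^{2k}` times a term at `z`, and reindexing the sum along this permutation gives the
transformation law.
-/

open Complex Real Filter Topology BigOperators

noncomputable section

/-- The form `Q(pX + qY, rX + sY)`, where `(a, b, c)` stands for `a X² + b X Y + c Y²`. -/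
def formSubst {R : Type*} [CommRing R] (p q r s : R) (Q : R × R × R) : R × R × R :=
  (Q.1 * p ^ 2 + Q.2.1 * p * r + Q.2.2 * r ^ 2,
   2 * Q.1 * p * q + Q.2.1 * (p * s + q * r) + 2 * Q.2.2 * r * s,
   Q.1 * q ^ 2 + Q.2.1 * q * s + Q.2.2 * s ^ 2)

section FormSubst

variable {R : Type*} [CommRing R] (p q r s : R) (Q : R × R × R)

lemma disc_formSubst :
    (formSubst p q r s Q).2.1 ^ 2 - 4 * (formSubst p q r s Q).1 * (formSubst p q r s Q).2.2
      = (p * s - q * r) ^ 2 * (Q.2.1 ^ 2 - 4 * Q.1 * Q.2.2) := by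
  simp only [formSubst]
  ring

lemma formSubst_adjugate_formSubst (h : p * s - q * r = 1) :
    formSubst s (-q) (-r) p (formSubst p q r s Q) = Q := by
  simp only [formSubst, Prod.ext_iff]
  refine ⟨?_, ?_, ?_⟩
  · linear_combination (Q.1 * (p * s - q * r + 1)) * h
  · linear_combination (Q.2.1 * (p * s - q * r + 1)) * h
  · linear_combination (Q.2.2 * (p * s - q * r + 1)) * h

end FormSubst

lemma quadratic_pos_of_disc_neg {R : Type*} [CommRing R] [LinearOrder R] [IsStrictOrderedRing R]
    {a b c : R} (ha : 0 < a) (hdisc : b ^ 2 - 4 * a * c < 0) {x y : R} (hxy : x ≠ 0 ∨ y ≠ 0) :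
    0 < a * x ^ 2 + b * x * y + c * y ^ 2 := by
  rcases eq_or_ne y 0 with rfl | hy
  · have hx : x ≠ 0 := hxy.resolve_right (not_not.mpr rfl)
    have : 0 < x ^ 2 := by positivity
    simpa using mul_pos ha this
  · have : 0 < y ^ 2 := by positivity
    nlinarith [sq_nonneg (2 * a * x + b * y), mul_pos this (neg_pos.mpr hdisc)]

lemma formSubst_fst_pos {p q r s D : ℤ} (h : p * s - q * r = 1) (hD : D < 0) {Q : ℤ × ℤ × ℤ}
    (hQ : Q ∈ QF D) : 0 < (formSubst p q r s Q).1 := by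
  have hpr : p ≠ 0 ∨ r ≠ 0 := by
    by_contra! h0
    simp [h0.1, h0.2] at h
  exact quadratic_pos_of_disc_neg hQ.1 (hQ.2 ▸ hD) hpr

lemma formSubst_mem_QF {p q r s D : ℤ} (h : p * s - q * r = 1) (hD : D < 0) {Q : ℤ × ℤ × ℤ}
    (hQ : Q ∈ QF D) : formSubst p q r s Q ∈ QF D :=
  ⟨formSubst_fst_pos h hD hQ, by rw [disc_formSubst, h, hQ.2, one_pow, one_mul]⟩

def QF.substEquiv {p q r s D : ℤ} (h : p * s - q * r = 1) (hD : D < 0) : QF D ≃ QF D where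
  toFun Q := ⟨formSubst p q r s Q, formSubst_mem_QF h hD Q.2⟩
  invFun Q := ⟨formSubst s (-q) (-r) p Q, formSubst_mem_QF (by linarith) hD Q.2⟩
  left_inv Q := Subtype.ext (formSubst_adjugate_formSubst p q r s Q h)
  right_inv Q := Subtype.ext (by
    simpa using formSubst_adjugate_formSubst s (-q) (-r) p Q (by linarith))

lemma QF.tsum_formSubst {α : Type*} [AddCommMonoid α] [TopologicalSpace α] {p q r s D : ℤ}
    (h : p * s - q * r = 1) (hD : D < 0) (f : ℤ × ℤ × ℤ → α) :
    ∑' Q : QF D, f (formSubst p q r s Q) = ∑' Q : QF D, f Q :=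
  (QF.substEquiv h hD).tsum_eq (f ∘ Subtype.val)

lemma qpoly_formSubst (p q r s : ℤ) (Q : ℤ × ℤ × ℤ) {z : ℂ} (hz : (r : ℂ) * z + s ≠ 0) :
    qpoly (formSubst p q r s Q) z =
      ((r : ℂ) * z + s) ^ 2 * qpoly Q ((p * z + q) / (r * z + s)) := by
  simp only [qpoly, formSubst]
  push_cast
  field_simp
  ring

lemma zpow_neg_eq_pow_mul_sq_mul_zpow_neg {K : Type*} [Field K] {d : K} (hd : d ≠ 0)
    (w : K) (k : ℕ) : w ^ (-(k : ℤ)) = d ^ (2 * k) * (d ^ 2 * w) ^ (-(k : ℤ)) := by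
  have hd2 : (d ^ 2) ^ (-(k : ℤ)) = (d ^ (2 * k))⁻¹ := by
    rw [zpow_neg, zpow_natCast, ← pow_mul]
  rw [mul_zpow, hd2, ← mul_assoc, mul_inv_cancel₀ (pow_ne_zero _ hd), one_mul]

theorem stmt2_general (k : ℕ) (D : ℤ) (hD : D < 0)
    (γ : Matrix.SpecialLinearGroup (Fin 2) ℤ) (z : ℂ) (hz : 0 < z.im) :
    fkD k D (mob γ z) = ((γ.1 1 0 : ℂ) * z + (γ.1 1 1 : ℂ)) ^ (2 * k) * fkD k D z := by
  have hdet : γ.1 0 0 * γ.1 1 1 - γ.1 0 1 * γ.1 1 0 = 1 := by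
    rw [← Matrix.det_fin_two, γ.det_coe]
  have hden : (γ.1 1 0 : ℂ) * z + γ.1 1 1 ≠ 0 := by
    simpa [UpperHalfPlane.denom] using
      UpperHalfPlane.denom_ne_zero_of_im (γ : GL (Fin 2) ℝ) hz.ne'
  have hterm (Q : ℤ × ℤ × ℤ) : qpoly Q (mob γ z) ^ (-(k : ℤ)) =
      ((γ.1 1 0 : ℂ) * z + γ.1 1 1) ^ (2 * k) *
        qpoly (formSubst (γ.1 0 0) (γ.1 0 1) (γ.1 1 0) (γ.1 1 1) Q) z ^ (-(k : ℤ)) := by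
    rw [qpoly_formSubst _ _ _ _ _ hden]
    exact zpow_neg_eq_pow_mul_sq_mul_zpow_neg hden _ k
  simp only [fkD, hterm, tsum_mul_left,
    QF.tsum_formSubst hdet hD (fun Q => qpoly Q z ^ (-(k : ℤ)))]
  ring

/-- `f_{k,D}` satisfies the weight `2k` modular transformation law
under `SL₂(ℤ)` at every non-CM point of the upper half-plane. -/
theorem stmt2 (k : ℕ) (hk : 2 ≤ k) (D : ℤ) (hD : D < 0)
    (hDcong : D % 4 = 0 ∨ D % 4 = 1)
    (γ : Matrix.SpecialLinearGroup (Fin 2) ℤ) (z : ℂ) (hz : 0 < z.im)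
    (hcm : ¬ IsCM D z) :
    fkD k D (mob γ z) = ((γ.1 1 0 : ℂ) * z + (γ.1 1 1 : ℂ)) ^ (2 * k) * fkD k D z :=
  stmt2_general k D hD γ z hz
end
end
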